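/- Let 𝓙 be a generalized complex structure on a finite-dimensional real vector space V, and let W ⊆ V be a split subspace, with N ⊆ V such that V = W ⊕ N and W ⊕ Ann(N) is stable under 𝓙. Then: (i) N ⊕ Ann(W) is also stable under 𝓙; (ii) with ψ : W ⊕ Ann(N) → W ⊕ W* the isomorphism (w,f) ↦ (w, f|_W), the map 𝓙_W := ψ ∘ (𝓙|_{W⊕Ann(N)}) ∘ ψ⁻¹ is a generalized complex structure on W; (iii) W is a generalized complex subspace of V, and the GCS on W determined by the induced maximally isotropic subspace E_W coincides with 𝓙_W. -/

import Mathlib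

open Module LinearMap TensorProduct

/-- The complexification `V_ℂ = ℂ ⊗_ℝ V`. -/
abbrev Cxf (V : Type*) [AddCommGroup V] [Module ℝ V] := ℂ ⊗[ℝ] V

section Conj

variable (V : Type*) [AddCommGroup V] [Module ℝ V]

/-- The complex conjugation on `V_ℂ = ℂ ⊗_ℝ V`. -/
noncomputable def conjC : Cxf V →ₗ[ℝ] Cxf V :=
  TensorProduct.map Complex.conjAe.toLinearMap LinearMap.id

lemma conjC_smul (c : ℂ) (x : Cxf V) :
    conjC V (c • x) = (starRingEnd ℂ c) • conjC V x := by
  induction x using TensorProduct.induction_on with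
  | zero => simp
  | tmul a v =>
      simp [conjC, TensorProduct.smul_tmul', map_mul, Complex.conjAe_coe]
  | add x y hx hy =>
      simp [smul_add, map_add, hx, hy]

/-- The conjugation induced on the complex dual of `V_ℂ`. -/
noncomputable def conjD : Module.Dual ℂ (Cxf V) →ₗ[ℝ] Module.Dual ℂ (Cxf V) where
  toFun f :=
    { toFun := fun x => starRingEnd ℂ (f (conjC V x))
      map_add' := by intro x y; simp [map_add]
      map_smul' := by intro c x; simp [conjC_smul, map_smul] }
  map_add' f g := by ext x; simp
  map_smul' r f := by ext x; simp

/-- The conjugation on `V_ℂ ⊕ V_ℂ*`. -/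
noncomputable def conjP :
    (Cxf V × Module.Dual ℂ (Cxf V)) →ₗ[ℝ] (Cxf V × Module.Dual ℂ (Cxf V)) :=
  LinearMap.prodMap (conjC V) (conjD V)

end Conj

section Pairing

variable (V : Type*) [AddCommGroup V] [Module ℝ V]

/-- The ℂ-bilinear extension of the standard pairing, on `V_ℂ ⊕ V_ℂ*`. -/
noncomputable def gcPairC (x y : Cxf V × Module.Dual ℂ (Cxf V)) : ℂ :=
  -(1/2) * (x.2 y.1 + y.2 x.1)

/-- A GCS on `V`, in terms of a maximally isotropic subspace `E ⊂ V_ℂ ⊕ V_ℂ*`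
with `E ∩ Ē = 0`. -/
noncomputable def IsGCSSub [FiniteDimensional ℝ V]
    (E : Submodule ℂ (Cxf V × Module.Dual ℂ (Cxf V))) : Prop :=
  (∀ x ∈ E, ∀ y ∈ E, gcPairC V x y = 0) ∧
  Module.finrank ℂ ↥E = Module.finrank ℝ V ∧
  (E.restrictScalars ℝ) ⊓ ((E.restrictScalars ℝ).map (conjP V)) = ⊥

end Pairing

section Induced

variable {V : Type*} [AddCommGroup V] [Module ℝ V]

/-- The complexified inclusion `W_ℂ → V_ℂ` of a real subspace `W ⊆ V`. -/
noncomputable def cxIncl (W : Submodule ℝ V) : Cxf ↥W →ₗ[ℂ] Cxf V :=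
  LinearMap.baseChange ℂ W.subtype

/-- The subspace `E_W ⊆ W_ℂ ⊕ W_ℂ*` induced by `E ⊆ V_ℂ ⊕ V_ℂ*`:
`E_W = {(w, f|_{W_ℂ}) : (w, f) ∈ E, w ∈ W_ℂ}`. -/
noncomputable def inducedSub (E : Submodule ℂ (Cxf V × Module.Dual ℂ (Cxf V)))
    (W : Submodule ℝ V) : Submodule ℂ (Cxf ↥W × Module.Dual ℂ (Cxf ↥W)) :=
  (E.comap ((cxIncl W).prodMap (LinearMap.id))).map
    ((LinearMap.id).prodMap ((cxIncl W).dualMap))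

/-- `W` is a generalized complex subspace if `E_W ∩ Ē_W = 0`. -/
noncomputable def IsGCSubspace [FiniteDimensional ℝ V]
    (E : Submodule ℂ (Cxf V × Module.Dual ℂ (Cxf V))) (W : Submodule ℝ V) : Prop :=
  ((inducedSub E W).restrictScalars ℝ) ⊓
    (((inducedSub E W).restrictScalars ℝ).map (conjP ↥W)) = ⊥

end Induced

section Automorphism

noncomputable def gcPair (V : Type*) [AddCommGroup V] [Module ℝ V]
    (x y : V × Module.Dual ℝ V) : ℝ :=
  -(1/2) * (x.2 y.1 + y.2 x.1)

noncomputable def IsGCS (V : Type*) [AddCommGroup V] [Module ℝ V]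
    (J : (V × Module.Dual ℝ V) →ₗ[ℝ] (V × Module.Dual ℝ V)) : Prop :=
  J ∘ₗ J = -LinearMap.id ∧ ∀ x y, gcPair V (J x) (J y) = gcPair V x y

/-- The GCS induced on a split subspace `W` (with splitting `V = W ⊕ N`):
`ψ ∘ (𝓙|_{W ⊕ Ann(N)}) ∘ ψ⁻¹`, where `ψ(w,f) = (w, f|_W)`. -/
noncomputable def inducedSplitJ
    {V : Type*} [AddCommGroup V] [Module ℝ V]
    (J : (V × Module.Dual ℝ V) →ₗ[ℝ] (V × Module.Dual ℝ V))
    (W N : Submodule ℝ V) (hWN : IsCompl W N) :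
    (↥W × Module.Dual ℝ ↥W) →ₗ[ℝ] (↥W × Module.Dual ℝ ↥W) :=
  (LinearMap.prodMap (W.linearProjOfIsCompl N hWN) (W.subtype.dualMap)) ∘ₗ J ∘ₗ
    (LinearMap.prodMap W.subtype ((W.linearProjOfIsCompl N hWN).dualMap))

end Automorphism

section Eigenspace

variable (X : Type*) [AddCommGroup X] [Module ℝ X]

/-- The canonical map `V* → (V_ℂ)*`, extending a real functional ℂ-linearly. -/
noncomputable def dualExt : Module.Dual ℝ X →ₗ[ℝ] Module.Dual ℂ (Cxf X) :=
  ((LinearMap.llcomp ℂ (Cxf X) (ℂ ⊗[ℝ] ℝ) ℂ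
      (Algebra.TensorProduct.rid ℝ ℂ ℂ).toLinearMap).restrictScalars ℝ) ∘ₗ
    (LinearMap.baseChangeHom ℝ ℂ X ℝ)

/-- The canonical real embedding `V ⊕ V* → V_ℂ ⊕ V_ℂ*`. -/
noncomputable def zeta : (X × Module.Dual ℝ X) →ₗ[ℝ] (Cxf X × Module.Dual ℂ (Cxf X)) :=
  LinearMap.prodMap ((TensorProduct.mk ℝ ℂ X) 1) (dualExt X)

/-- Multiplication by `i` on `V_ℂ ⊕ V_ℂ*`, as an ℝ-linear map. -/
noncomputable def smulI :
    (Cxf X × Module.Dual ℂ (Cxf X)) →ₗ[ℝ] (Cxf X × Module.Dual ℂ (Cxf X)) :=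
  (Complex.I • (LinearMap.id :
      (Cxf X × Module.Dual ℂ (Cxf X)) →ₗ[ℂ] (Cxf X × Module.Dual ℂ (Cxf X)))).restrictScalars ℝ

/-- The map `p ↦ ζ(p) - i•ζ(𝓙 p)`, whose range is the `+i`-eigenspace of the
ℂ-linear extension of `𝓙` to `V_ℂ ⊕ V_ℂ*`. -/
noncomputable def etaJ (J : (X × Module.Dual ℝ X) →ₗ[ℝ] (X × Module.Dual ℝ X)) :
    (X × Module.Dual ℝ X) →ₗ[ℝ] (Cxf X × Module.Dual ℂ (Cxf X)) :=
  zeta X - (smulI X) ∘ₗ (zeta X) ∘ₗ J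

end Eigenspace

/-!
Write `S = W ⊕ Ann(N)` and `T = N ⊕ Ann(W)`, so that `V ⊕ V* = S ⊕ T` and `T` is the orthogonal
of `S` for the pairing; being orthogonal, `𝓙` preserves `T` along with `S`. The map
`ψ = (π_W, restriction to W)` kills `T` and inverts `(w, f) ↦ (w, f ∘ π_W)` on `S`, so
`ψ ∘ 𝓙 = 𝓙_W ∘ ψ` on all of `V ⊕ V*`, which makes `𝓙_W` a GCS. The `+i`-eigenspace of `𝓙`
consists of the vectors `p - i𝓙p`; such a vector lies in `W_ℂ ⊕ V_ℂ*` exactly when `p` and `𝓙p`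
have their vector parts in `W`, and then its restriction to `W` is `ψp - i𝓙_W(ψp)`. Hence `E_W`
is the `+i`-eigenspace of `𝓙_W`, which meets its conjugate trivially.
-/

section Complexification

variable (X : Type*) [AddCommGroup X] [Module ℝ X]

noncomputable def cxRe : Cxf X →ₗ[ℝ] X :=
  (TensorProduct.lid ℝ X).toLinearMap ∘ₗ TensorProduct.map Complex.reLm LinearMap.id

noncomputable def cxIm : Cxf X →ₗ[ℝ] X :=
  (TensorProduct.lid ℝ X).toLinearMap ∘ₗ TensorProduct.map Complex.imLm LinearMap.id

variable {X}

@[simp]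
lemma cxRe_tmul (c : ℂ) (x : X) : cxRe X (c ⊗ₜ x) = c.re • x := by
  simp [cxRe]

@[simp]
lemma cxIm_tmul (c : ℂ) (x : X) : cxIm X (c ⊗ₜ x) = c.im • x := by
  simp [cxIm]

lemma cxRe_tmul_add_I_smul (a b : X) :
    cxRe X ((1 : ℂ) ⊗ₜ a + Complex.I • (1 : ℂ) ⊗ₜ b) = a := by
  simp [smul_tmul']

lemma cxIm_tmul_add_I_smul (a b : X) :
    cxIm X ((1 : ℂ) ⊗ₜ a + Complex.I • (1 : ℂ) ⊗ₜ b) = b := by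
  simp [smul_tmul']

@[simp]
lemma dualExt_tmul (f : Dual ℝ X) (c : ℂ) (x : X) : dualExt X f (c ⊗ₜ x) = f x • c := by
  simp [dualExt]

lemma eq_zero_of_dualExt_add_I_smul_eq_zero {f g : Dual ℝ X}
    (h : dualExt X f + Complex.I • dualExt X g = 0) : f = 0 ∧ g = 0 := by
  have key (x : X) : (f x : ℂ) + Complex.I * g x = 0 := by
    simpa [Complex.real_smul] using LinearMap.congr_fun h ((1 : ℂ) ⊗ₜ x)
  exact ⟨LinearMap.ext fun x ↦ by simpa using congrArg Complex.re (key x),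
    LinearMap.ext fun x ↦ by simpa using congrArg Complex.im (key x)⟩

@[simp]
lemma zeta_fst (p : X × Dual ℝ X) : (zeta X p).1 = (1 : ℂ) ⊗ₜ p.1 := rfl

@[simp]
lemma zeta_snd (p : X × Dual ℝ X) : (zeta X p).2 = dualExt X p.2 := rfl

lemma etaJ_apply (K : (X × Dual ℝ X) →ₗ[ℝ] (X × Dual ℝ X)) (p : X × Dual ℝ X) :
    etaJ X K p = zeta X p - Complex.I • zeta X (K p) := rfl

lemma eq_zero_of_zeta_add_I_smul_zeta_eq_zero {a b : X × Dual ℝ X}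
    (h : zeta X a + Complex.I • zeta X b = 0) : a = 0 ∧ b = 0 := by
  have h₁ : (1 : ℂ) ⊗ₜ a.1 + Complex.I • (1 : ℂ) ⊗ₜ b.1 = 0 := congrArg Prod.fst h
  obtain ⟨ha₂, hb₂⟩ := eq_zero_of_dualExt_add_I_smul_eq_zero (congrArg Prod.snd h)
  refine ⟨Prod.ext ?_ ha₂, Prod.ext ?_ hb₂⟩
  · simpa [cxRe_tmul_add_I_smul] using congrArg (cxRe X) h₁
  · simpa [cxIm_tmul_add_I_smul] using congrArg (cxIm X) h₁

lemma conjC_tmul (c : ℂ) (x : X) : conjC X (c ⊗ₜ x) = starRingEnd ℂ c ⊗ₜ x := by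
  simp [conjC, Complex.conjAe_coe]

lemma conjD_apply (f : Dual ℂ (Cxf X)) (x : Cxf X) :
    conjD X f x = starRingEnd ℂ (f (conjC X x)) := rfl

lemma conjD_dualExt (f : Dual ℝ X) : conjD X (dualExt X f) = dualExt X f := by
  ext x
  simp [conjD_apply, conjC_tmul, Complex.real_smul]

lemma conjD_smul (c : ℂ) (f : Dual ℂ (Cxf X)) :
    conjD X (c • f) = starRingEnd ℂ c • conjD X f := by
  ext x
  simp [conjD_apply]

lemma conjP_zeta (p : X × Dual ℝ X) : conjP X (zeta X p) = zeta X p :=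
  Prod.ext (by simp [conjP, conjC_tmul]) (conjD_dualExt p.2)

lemma conjP_I_smul (x : Cxf X × Dual ℂ (Cxf X)) :
    conjP X (Complex.I • x) = -(Complex.I • conjP X x) :=
  Prod.ext (by simp [conjP, conjC_smul]) (by simp [conjP, conjD_smul])

/-- An `i`-eigenvector `ζ(p) - iζ(Kp)` that is also a `-i`-eigenvector `ζ(q) + iζ(Kq)`
has `p = q` and `Kp = -Kq`, so `Kp = 0` and `p = -K(Kp) = 0`. -/
lemma range_etaJ_inf_map_conjP {K : (X × Dual ℝ X) →ₗ[ℝ] (X × Dual ℝ X)}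
    (hK : K ∘ₗ K = -LinearMap.id) :
    range (etaJ X K) ⊓ (range (etaJ X K)).map (conjP X) = ⊥ := by
  rw [eq_bot_iff]
  rintro _ ⟨⟨p, rfl⟩, q, ⟨q, rfl⟩, hpq⟩
  have hconj : conjP X (etaJ X K q) = zeta X q + Complex.I • zeta X (K q) := by
    rw [etaJ_apply, map_sub, conjP_I_smul, conjP_zeta, conjP_zeta, sub_neg_eq_add]
  have h : zeta X (p - q) + Complex.I • zeta X (-K p - K q) = 0 := by
    rw [hconj, etaJ_apply] at hpq
    simp only [map_sub, map_neg]
    linear_combination (norm := module) -hpq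
  obtain ⟨hpq, hK'⟩ := eq_zero_of_zeta_add_I_smul_zeta_eq_zero h
  rw [sub_eq_zero] at hpq
  subst hpq
  have hKp : K p = 0 := by
    have : (2 : ℝ) • K p = 0 := by rw [two_smul]; linear_combination (norm := module) -hK'
    simpa using this
  have hp : p = 0 := by simpa [hKp] using (LinearMap.congr_fun hK p).symm
  simp [hp]

end Complexification

section Subspace

variable {V : Type*} [AddCommGroup V] [Module ℝ V] (W : Submodule ℝ V)

lemma cxIncl_tmul (c : ℂ) (w : W) : cxIncl W (c ⊗ₜ w) = c ⊗ₜ (w : V) := rfl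

lemma cxIncl_injective : Function.Injective (cxIncl W) := by
  rw [cxIncl, LinearMap.baseChange_eq_ltensor]
  exact Module.Flat.lTensor_preserves_injective_linearMap _ W.injective_subtype

lemma cxRe_cxIncl (y : Cxf W) : cxRe V (cxIncl W y) = cxRe W y := by
  induction y using TensorProduct.induction_on with
  | zero => simp
  | tmul c w => simp [cxIncl_tmul]
  | add y z hy hz => simp only [map_add, hy, hz, Submodule.coe_add]

lemma cxIm_cxIncl (y : Cxf W) : cxIm V (cxIncl W y) = cxIm W y := by
  induction y using TensorProduct.induction_on with
  | zero => simp
  | tmul c w => simp [cxIncl_tmul]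
  | add y z hy hz => simp only [map_add, hy, hz, Submodule.coe_add]

lemma mem_of_tmul_add_I_smul_eq_cxIncl {a b : V} {y : Cxf W}
    (h : (1 : ℂ) ⊗ₜ a + Complex.I • (1 : ℂ) ⊗ₜ b = cxIncl W y) : a ∈ W ∧ b ∈ W := by
  constructor
  · rw [← cxRe_tmul_add_I_smul a b, h, cxRe_cxIncl]; exact Submodule.coe_mem _
  · rw [← cxIm_tmul_add_I_smul a b, h, cxIm_cxIncl]; exact Submodule.coe_mem _

lemma dualMap_cxIncl_dualExt (f : Dual ℝ V) :
    (cxIncl W).dualMap (dualExt V f) = dualExt W (W.subtype.dualMap f) := by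
  ext w
  simp [cxIncl_tmul]

end Subspace

section Split

variable {V : Type*} [AddCommGroup V] [Module ℝ V] {W N : Submodule ℝ V}

lemma gcPair_eq_zero_of_mem_prod {r t : V × Dual ℝ V} (hr : r ∈ W.prod N.dualAnnihilator)
    (ht : t ∈ N.prod W.dualAnnihilator) : gcPair V t r = 0 := by
  have h₁ : t.2 r.1 = 0 := (Submodule.mem_dualAnnihilator _).1 ht.2 r.1 hr.1
  have h₂ : r.2 t.1 = 0 := (Submodule.mem_dualAnnihilator _).1 hr.2 t.1 ht.1
  simp [gcPair, h₁, h₂]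

/-- The isomorphism `ψ : W ⊕ Ann(N) → W ⊕ W*`, extended by zero on `N ⊕ Ann(W)`. -/
noncomputable def psiTo (hWN : IsCompl W N) : (V × Dual ℝ V) →ₗ[ℝ] (W × Dual ℝ W) :=
  (W.projectionOnto N hWN).prodMap W.subtype.dualMap

/-- The inverse of `ψ`, as a map into `V ⊕ V*` with range `W ⊕ Ann(N)`. -/
noncomputable def psiFrom (hWN : IsCompl W N) : (W × Dual ℝ W) →ₗ[ℝ] (V × Dual ℝ V) :=
  W.subtype.prodMap (W.projectionOnto N hWN).dualMap

lemma inducedSplitJ_apply (hWN : IsCompl W N) (J : (V × Dual ℝ V) →ₗ[ℝ] (V × Dual ℝ V))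
    (x : W × Dual ℝ W) :
    inducedSplitJ J W N hWN x = psiTo hWN (J (psiFrom hWN x)) := rfl

@[simp]
lemma psiTo_psiFrom (hWN : IsCompl W N) (x : W × Dual ℝ W) : psiTo hWN (psiFrom hWN x) = x :=
  Prod.ext (W.projectionOnto_apply_left hWN x.1)
    (LinearMap.ext fun w ↦ congrArg x.2 (W.projectionOnto_apply_left hWN w))

lemma psiFrom_mem (hWN : IsCompl W N) (x : W × Dual ℝ W) :
    psiFrom hWN x ∈ W.prod N.dualAnnihilator :=
  ⟨x.1.2, (Submodule.mem_dualAnnihilator _).2 fun n hn ↦ by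
    simp [psiFrom, (W.projectionOnto_apply_eq_zero_iff hWN).2 hn]⟩

lemma psiTo_eq_zero_of_mem (hWN : IsCompl W N) {t : V × Dual ℝ V}
    (ht : t ∈ N.prod W.dualAnnihilator) : psiTo hWN t = 0 :=
  Prod.ext ((W.projectionOnto_apply_eq_zero_iff hWN).2 ht.1)
    (LinearMap.ext fun w ↦ (Submodule.mem_dualAnnihilator _).1 ht.2 w w.2)

lemma sub_psiFrom_psiTo_mem (hWN : IsCompl W N) (p : V × Dual ℝ V) :
    p - psiFrom hWN (psiTo hWN p) ∈ N.prod W.dualAnnihilator := by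
  refine ⟨?_, (Submodule.mem_dualAnnihilator _).2 fun w hw ↦ ?_⟩
  · have h : p.1 - W.projection N hWN p.1 ∈ N := by
      rw [← Submodule.projection_eq_self_sub_projection hWN]
      exact Submodule.projection_apply_mem _ _
    simpa [psiTo, psiFrom] using h
  · simp [psiTo, psiFrom, W.projectionOnto_apply_of_mem_left hWN hw]

lemma gcPair_psiTo (hWN : IsCompl W N) {p q : V × Dual ℝ V} (hp : p.1 ∈ W) (hq : q.1 ∈ W) :
    gcPair W (psiTo hWN p) (psiTo hWN q) = gcPair V p q := by
  simp [gcPair, psiTo, W.projectionOnto_apply_of_mem_left hWN hp,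
    W.projectionOnto_apply_of_mem_left hWN hq]

lemma gcPair_psiFrom (hWN : IsCompl W N) (x y : W × Dual ℝ W) :
    gcPair V (psiFrom hWN x) (psiFrom hWN y) = gcPair W x y := by
  simp [gcPair, psiFrom]

lemma mem_prod_of_forall_gcPair_eq_zero (hWN : IsCompl W N) {q : V × Dual ℝ V}
    (h : ∀ p ∈ W.prod N.dualAnnihilator, gcPair V q p = 0) :
    q ∈ N.prod W.dualAnnihilator := by
  refine Submodule.mem_prod.2 ⟨?_, (Submodule.mem_dualAnnihilator _).2 fun w hw ↦ ?_⟩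
  · rw [← W.projectionOnto_apply_eq_zero_iff hWN, ← forall_dual_apply_eq_zero_iff ℝ]
    intro g
    simpa [gcPair, psiFrom] using h (psiFrom hWN (0, g)) (psiFrom_mem hWN _)
  · simpa [gcPair] using h (w, 0) ⟨hw, Submodule.zero_mem _⟩

end Split

section InducedStructure

variable {V : Type*} [AddCommGroup V] [Module ℝ V] {J : (V × Dual ℝ V) →ₗ[ℝ] (V × Dual ℝ V)}
  {W N : Submodule ℝ V}

lemma IsGCS.apply_apply (hJ : IsGCS V J) (p : V × Dual ℝ V) : J (J p) = -p :=
  LinearMap.congr_fun hJ.1 p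

/-- `N ⊕ Ann(W)` is the orthogonal of `W ⊕ Ann(N)`, and `𝓙` preserves orthogonality. -/
lemma IsGCS.stable_complement (hJ : IsGCS V J) (hWN : IsCompl W N)
    (hS : ∀ p ∈ W.prod N.dualAnnihilator, J p ∈ W.prod N.dualAnnihilator) :
    ∀ q ∈ N.prod W.dualAnnihilator, J q ∈ N.prod W.dualAnnihilator := by
  intro q hq
  refine mem_prod_of_forall_gcPair_eq_zero hWN fun p hp ↦ ?_
  have hJp : -J p ∈ W.prod N.dualAnnihilator := Submodule.neg_mem _ (hS p hp)
  calc gcPair V (J q) p = gcPair V (J q) (J (-J p)) := by rw [map_neg, hJ.apply_apply, neg_neg]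
    _ = gcPair V q (-J p) := hJ.2 q _
    _ = 0 := gcPair_eq_zero_of_mem_prod hJp hq

/-- `ψ` intertwines `𝓙` with `𝓙_W` on all of `V ⊕ V*`: it kills the `N ⊕ Ann(W)`-component,
which `𝓙` preserves. -/
lemma inducedSplitJ_psiTo (hWN : IsCompl W N)
    (hT : ∀ q ∈ N.prod W.dualAnnihilator, J q ∈ N.prod W.dualAnnihilator)
    (p : V × Dual ℝ V) :
    inducedSplitJ J W N hWN (psiTo hWN p) = psiTo hWN (J p) := by
  have h := psiTo_eq_zero_of_mem hWN (hT _ (sub_psiFrom_psiTo_mem hWN p))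
  rw [map_sub, map_sub, sub_eq_zero] at h
  rw [inducedSplitJ_apply, h]

lemma isGCS_inducedSplitJ (hJ : IsGCS V J) (hWN : IsCompl W N)
    (hS : ∀ p ∈ W.prod N.dualAnnihilator, J p ∈ W.prod N.dualAnnihilator)
    (hT : ∀ q ∈ N.prod W.dualAnnihilator, J q ∈ N.prod W.dualAnnihilator) :
    IsGCS W (inducedSplitJ J W N hWN) := by
  refine ⟨LinearMap.ext fun x ↦ ?_, fun x y ↦ ?_⟩
  · simp only [LinearMap.comp_apply, inducedSplitJ_apply, inducedSplitJ_psiTo hWN hT,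
      hJ.apply_apply, map_neg, psiTo_psiFrom, LinearMap.neg_apply, LinearMap.id_apply]
  · rw [inducedSplitJ_apply, inducedSplitJ_apply,
      gcPair_psiTo hWN (hS _ (psiFrom_mem hWN x)).1 (hS _ (psiFrom_mem hWN y)).1, hJ.2,
      gcPair_psiFrom]

end InducedStructure

section Eigenspace

variable {V : Type*} [AddCommGroup V] [Module ℝ V] {J : (V × Dual ℝ V) →ₗ[ℝ] (V × Dual ℝ V)}
  {W N : Submodule ℝ V} {K : (W × Dual ℝ W) →ₗ[ℝ] (W × Dual ℝ W)}

lemma mem_of_etaJ_fst_eq_cxIncl {p : V × Dual ℝ V} {y : Cxf W}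
    (h : (etaJ V J p).1 = cxIncl W y) : p.1 ∈ W ∧ (J p).1 ∈ W := by
  have h' : (1 : ℂ) ⊗ₜ p.1 + Complex.I • (1 : ℂ) ⊗ₜ (-(J p).1) = cxIncl W y := by
    rw [← h, tmul_neg, smul_neg, ← sub_eq_add_neg]; rfl
  obtain ⟨h₁, h₂⟩ := mem_of_tmul_add_I_smul_eq_cxIncl W h'
  exact ⟨h₁, neg_mem_iff.1 h₂⟩

lemma cxIncl_etaJ_psiTo_fst (hWN : IsCompl W N)
    (hK : ∀ p, K (psiTo hWN p) = psiTo hWN (J p)) {p : V × Dual ℝ V}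
    (h₁ : p.1 ∈ W) (h₂ : (J p).1 ∈ W) :
    cxIncl W (etaJ W K (psiTo hWN p)).1 = (etaJ V J p).1 := by
  rw [etaJ_apply, etaJ_apply, hK]
  simp [psiTo, cxIncl_tmul, W.projectionOnto_apply_of_mem_left hWN h₁,
    W.projectionOnto_apply_of_mem_left hWN h₂]

lemma dualMap_cxIncl_etaJ_snd (hWN : IsCompl W N)
    (hK : ∀ p, K (psiTo hWN p) = psiTo hWN (J p)) (p : V × Dual ℝ V) :
    (cxIncl W).dualMap (etaJ V J p).2 = (etaJ W K (psiTo hWN p)).2 := by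
  rw [etaJ_apply, etaJ_apply, hK]
  simp [psiTo, dualMap_cxIncl_dualExt]

lemma restrictScalars_inducedSub_eq_range_etaJ (hWN : IsCompl W N)
    (hS : ∀ p ∈ W.prod N.dualAnnihilator, J p ∈ W.prod N.dualAnnihilator)
    (hT : ∀ q ∈ N.prod W.dualAnnihilator, J q ∈ N.prod W.dualAnnihilator)
    {E : Submodule ℂ (Cxf V × Dual ℂ (Cxf V))} (hE : E.restrictScalars ℝ = range (etaJ V J)) :
    (inducedSub E W).restrictScalars ℝ = range (etaJ W (inducedSplitJ J W N hWN)) := by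
  have hK := inducedSplitJ_psiTo hWN hT
  have hmemE (z) : z ∈ E ↔ z ∈ range (etaJ V J) := by
    rw [← hE, Submodule.restrictScalars_mem]
  ext x
  rw [Submodule.restrictScalars_mem, inducedSub, Submodule.mem_map]
  constructor
  · rintro ⟨y, hy, rfl⟩
    obtain ⟨p, hp⟩ := (hmemE _).1 (Submodule.mem_comap.1 hy)
    have hp₁ : (etaJ V J p).1 = cxIncl W y.1 := congrArg Prod.fst hp
    obtain ⟨h₁, h₂⟩ := mem_of_etaJ_fst_eq_cxIncl hp₁
    refine ⟨psiTo hWN p, Prod.ext ?_ ?_⟩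
    · exact cxIncl_injective W ((cxIncl_etaJ_psiTo_fst hWN hK h₁ h₂).trans hp₁)
    · rw [← dualMap_cxIncl_etaJ_snd hWN hK, hp]
      rfl
  · rintro ⟨q, rfl⟩
    obtain ⟨p, hp, rfl⟩ : ∃ p ∈ W.prod N.dualAnnihilator, psiTo hWN p = q :=
      ⟨psiFrom hWN q, psiFrom_mem hWN q, psiTo_psiFrom hWN q⟩
    refine ⟨((etaJ W (inducedSplitJ J W N hWN) (psiTo hWN p)).1, (etaJ V J p).2),
      (hmemE _).2 ⟨p, ?_⟩, ?_⟩
    · exact Prod.ext (cxIncl_etaJ_psiTo_fst hWN hK hp.1 (hS p hp).1).symm rfl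
    · exact Prod.ext rfl (dualMap_cxIncl_etaJ_snd hWN hK p)

end Eigenspace

theorem split_subspace_is_GC_subspace
    (V : Type*) [AddCommGroup V] [Module ℝ V] [FiniteDimensional ℝ V]
    (J : (V × Module.Dual ℝ V) →ₗ[ℝ] (V × Module.Dual ℝ V)) (hJ : IsGCS V J)
    (W N : Submodule ℝ V) (hWN : IsCompl W N)
    (hstable : ∀ p ∈ W.prod N.dualAnnihilator, J p ∈ W.prod N.dualAnnihilator)
    (E : Submodule ℂ (Cxf V × Module.Dual ℂ (Cxf V)))
    (hE : E.restrictScalars ℝ = LinearMap.range (etaJ V J)) :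
    (∀ p ∈ N.prod W.dualAnnihilator, J p ∈ N.prod W.dualAnnihilator) ∧
    IsGCS ↥W (inducedSplitJ J W N hWN) ∧
    IsGCSubspace E W ∧
    (inducedSub E W).restrictScalars ℝ =
      LinearMap.range (etaJ ↥W (inducedSplitJ J W N hWN)) := by
  have hT := hJ.stable_complement hWN hstable
  have hGCS := isGCS_inducedSplitJ hJ hWN hstable hT
  have hEW := restrictScalars_inducedSub_eq_range_etaJ hWN hstable hT hE
  refine ⟨hT, hGCS, ?_, hEW⟩
  rw [IsGCSubspace, hEW]
  exact range_etaJ_inf_map_conjP hGCS.1
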